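/- There exists a solvable finite group G with the same prime graph as PGL(2,9): G has order divisible exactly by the primes 2, 3, 5, has an element of order 10, and has no element of order 6 or 15. -/

import Mathlib

/-!
The witness is the Frobenius group `F₈₁ ⋊ C₁₀`, with `C₁₀ ≤ F₈₁ˣ` acting by multiplication; its
order is `810 = 2 · 3⁴ · 5`, and `|PGL(2,9)| = 5760 / 8 = 720` has the same prime divisors.
An element `(b, u)` with `u ≠ 1` satisfies `(b, u) ^ n = ((1 + u + ⋯ + u ^ (n - 1)) b, u ^ n)`, and
the geometric sum vanishes once `u ^ n = 1`, so the element has the order of `u`, a divisor of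
`10`; the elements with `u = 1` form `F₈₁` and have order dividing `3`. Hence `6` and `15` are
not element orders, while a generator of `C₁₀` has order `10`.
-/

/-- `PGL(2,9)`: `GL(2, F₉)` modulo its center. -/
abbrev PGL29 : Type :=
  (Matrix.GeneralLinearGroup (Fin 2) (GaloisField 3 2)) ⧸
    Subgroup.center (Matrix.GeneralLinearGroup (Fin 2) (GaloisField 3 2))

open Finset SemidirectProduct

theorem Nat.setOf_prime_and_dvd_eq_primeFactors {n : ℕ} (hn : n ≠ 0) :
    {p : ℕ | p.Prime ∧ p ∣ n} = n.primeFactors := by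
  ext p
  simp [hn]

theorem IsCyclic.exists_orderOf_eq_of_dvd {G : Type*} [Group G] [IsCyclic G] [Finite G] {d : ℕ}
    (hd : d ∣ Nat.card G) : ∃ g : G, orderOf g = d := by
  obtain ⟨g, hg⟩ := IsCyclic.exists_ofOrder_eq_natCard (α := G)
  have hd0 : Nat.card G / d ≠ 0 := (Nat.div_pos (Nat.le_of_dvd Nat.card_pos hd)
    (Nat.pos_of_dvd_of_pos hd Nat.card_pos)).ne'
  refine ⟨g ^ (Nat.card G / d), ?_⟩
  rw [orderOf_pow_of_dvd hd0 (hg.symm ▸ Nat.div_dvd_of_dvd hd), hg,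
    Nat.div_div_self hd Nat.card_pos.ne']

instance SemidirectProduct.finite {N G : Type*} [Group N] [Group G] {φ : G →* MulAut N}
    [Finite N] [Finite G] : Finite (N ⋊[φ] G) :=
  Finite.of_equiv _ equivProd.symm

instance SemidirectProduct.isSolvable {N G : Type*} [Group N] [Group G] {φ : G →* MulAut N}
    [Group.IsSolvable N] [Group.IsSolvable G] : Group.IsSolvable (N ⋊[φ] G) :=
  Group.isSolvable_of_ker_le_range inl rightHom range_inl_eq_ker_rightHom.ge

namespace Matrix.GeneralLinearGroup

variable {n R : Type*} [Fintype n] [DecidableEq n] [Nonempty n] [CommRing R]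

theorem scalar_injective : Function.Injective (scalar n : Rˣ →* GL n R) :=
  fun _ _ h => Units.ext (Matrix.scalar_inj.mp (congrArg Units.val h))

theorem card_center : Nat.card (Subgroup.center (GL n R)) = Nat.card Rˣ := by
  rw [center_eq_range_scalar]
  exact (Nat.card_congr (MonoidHom.ofInjective scalar_injective).toEquiv).symm

theorem card_quotient_center_mul {K : Type*} [Field K] :
    Nat.card (GL n K ⧸ Subgroup.center (GL n K)) * (Nat.card K - 1) = Nat.card (GL n K) := by
  rw [Subgroup.card_eq_card_quotient_mul_card_subgroup (Subgroup.center (GL n K)), card_center,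
    Nat.card_units]

end Matrix.GeneralLinearGroup

/-- The group of maps `x ↦ u * x + b` of `K` with `u ∈ H`. -/
abbrev AffineGroup (K : Type*) [Field K] (H : Subgroup Kˣ) : Type _ :=
  Multiplicative K ⋊[(MulAutMultiplicative K).symm.toMonoidHom.comp
    (DistribMulAction.toAddAut H K)] H

namespace AffineGroup

variable {K : Type*} [Field K] {H : Subgroup Kˣ}

theorem mul_left_eq (g h : AffineGroup K H) :
    (g * h).left = Multiplicative.ofAdd (g.left.toAdd + ((g.right : Kˣ) : K) * h.left.toAdd) :=
  rfl

theorem right_pow (g : AffineGroup K H) (n : ℕ) : (g ^ n).right = g.right ^ n :=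
  map_pow rightHom g n

theorem left_pow (g : AffineGroup K H) (n : ℕ) :
    (g ^ n).left =
      Multiplicative.ofAdd ((∑ i ∈ range n, ((g.right : Kˣ) : K) ^ i) * g.left.toAdd) := by
  induction n with
  | zero => simp
  | succ n ih =>
    rw [pow_succ, mul_left_eq, ih, right_pow, sum_range_succ, toAdd_ofAdd]
    push_cast
    rw [add_mul]

theorem orderOf_eq_orderOf_right (g : AffineGroup K H) (hg : g.right ≠ 1) :
    orderOf g = orderOf g.right := by
  refine (orderOf_dvd_of_pow_eq_one ?_).antisymm (orderOf_map_dvd rightHom g)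
  set u : K := ((g.right : Kˣ) : K)
  have hu : u ≠ 1 := fun h => hg (Subtype.ext (Units.ext h))
  have hun : u ^ orderOf g.right = 1 := by
    rw [← Units.val_pow_eq_pow_val, ← Subgroup.coe_pow, pow_orderOf_eq_one]; rfl
  have hsum : ∑ i ∈ range (orderOf g.right), u ^ i = 0 := by
    have := mul_geom_sum u (orderOf g.right)
    rw [hun, sub_self] at this
    exact (mul_eq_zero.mp this).resolve_left (sub_ne_zero.mpr hu)
  ext
  · rw [left_pow, hsum, zero_mul]; rfl
  · rw [right_pow, pow_orderOf_eq_one]; rfl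

theorem orderOf_dvd_of_right_eq_one (p : ℕ) [CharP K p] (g : AffineGroup K H)
    (hg : g.right = 1) : orderOf g ∣ p := by
  refine orderOf_dvd_of_pow_eq_one ?_
  ext
  · rw [left_pow, hg]
    simp
  · rw [right_pow, hg, one_pow]; rfl

theorem orderOf_dvd_char_or_dvd_card (p : ℕ) [CharP K p] (g : AffineGroup K H) :
    orderOf g ∣ p ∨ orderOf g ∣ Nat.card H := by
  by_cases hg : g.right = 1
  · exact .inl (orderOf_dvd_of_right_eq_one p g hg)
  · exact .inr (orderOf_eq_orderOf_right g hg ▸ orderOf_dvd_natCard g.right)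

theorem card (H : Subgroup Kˣ) : Nat.card (AffineGroup K H) = Nat.card K * Nat.card H := by
  rw [SemidirectProduct.card, Nat.card_congr Multiplicative.toAdd]

end AffineGroup

theorem card_PGL29 : Nat.card PGL29 = 720 := by
  have := Fintype.ofFinite (GaloisField 3 2)
  have hq : Nat.card (GaloisField 3 2) = 9 := GaloisField.card 3 2 (by norm_num)
  have h : Nat.card PGL29 * (Nat.card (GaloisField 3 2) - 1) =
      Nat.card (GL (Fin 2) (GaloisField 3 2)) :=
    Matrix.GeneralLinearGroup.card_quotient_center_mul
  rw [Matrix.card_GL_field, ← Nat.card_eq_fintype_card, hq] at h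
  have h8 : Nat.card PGL29 * 8 = 5760 := by simpa [Fin.prod_univ_two] using h
  omega

/-- There exists a solvable finite group with the same prime graph as
`PGL(2,9)`: its set of prime divisors is `{2, 3, 5}`, it has an element of
order `10`, and it has no element of order `6` or of order `15`. -/
theorem exists_solvable_group_same_primeGraph_as_PGL29 :
    ∃ (G : Type) (_ : Group G), Finite G ∧ IsSolvable G ∧
      {p : ℕ | p.Prime ∧ p ∣ Nat.card G} =
        {p : ℕ | p.Prime ∧ p ∣ Nat.card PGL29} ∧
      {p : ℕ | p.Prime ∧ p ∣ Nat.card G} = ({2, 3, 5} : Set ℕ) ∧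
      (∃ g : G, orderOf g = 10) ∧
      ¬(∃ g : G, orderOf g = 6) ∧ ¬(∃ g : G, orderOf g = 15) := by
  have hF81 : Nat.card (GaloisField 3 4) = 81 := GaloisField.card 3 4 (by norm_num)
  obtain ⟨ζ, hζ⟩ : ∃ ζ : (GaloisField 3 4)ˣ, orderOf ζ = 10 :=
    IsCyclic.exists_orderOf_eq_of_dvd (by rw [Nat.card_units, hF81]; norm_num)
  let G := AffineGroup (GaloisField 3 4) (Subgroup.zpowers ζ)
  have hG : Nat.card G = 810 := by rw [AffineGroup.card, hF81, Nat.card_zpowers, hζ]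
  have hprimes : {p : ℕ | p.Prime ∧ p ∣ Nat.card G} = ({2, 3, 5} : Set ℕ) := by
    rw [hG, Nat.setOf_prime_and_dvd_eq_primeFactors (by norm_num)]
    simp [← Nat.toFinset_factors]
  have hprimesPGL : {p : ℕ | p.Prime ∧ p ∣ Nat.card PGL29} = ({2, 3, 5} : Set ℕ) := by
    rw [card_PGL29, Nat.setOf_prime_and_dvd_eq_primeFactors (by norm_num)]
    simp [← Nat.toFinset_factors]
  have hgen : orderOf (inr ⟨ζ, Subgroup.mem_zpowers ζ⟩ : G) = 10 := by
    rw [orderOf_injective inr inr_injective, Subgroup.orderOf_mk, hζ]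
  have horders (g : G) : orderOf g ∣ 3 ∨ orderOf g ∣ 10 := by
    simpa [Nat.card_zpowers, hζ] using AffineGroup.orderOf_dvd_char_or_dvd_card 3 g
  refine ⟨G, inferInstance, inferInstance, SemidirectProduct.isSolvable,
    hprimes.trans hprimesPGL.symm, hprimes, ⟨_, hgen⟩, ?_, ?_⟩ <;>
  · rintro ⟨g, hg⟩
    have := horders g
    rw [hg] at this
    norm_num at this
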